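/- arXiv:2605.24292 — 2 statements merged into one kernel-verified Lean document; each statement's English description precedes it below -/
import Mathlib

section
/- Let X and Y be i.i.d. positive random variables with finite expectations, and let C be any real number. Then log E[X] ≤ E[log X] − 1 + C + e^{−C} · E[Y/X], provided E[Y/X] is finite. -/
theorem isvgb_two_point {S : Type*} [Fintype S] (w f : S → ℝ)
    (hw : ∀ s, 0 ≤ w s) (hw1 : ∑ s, w s = 1) (hf : ∀ s, 0 < f s)
    (C : ℝ) :
    Real.log (∑ s, w s * f s)
      ≤ (∑ s, w s * Real.log (f s)) - 1 + C
        + Real.exp (-C) * ∑ s, ∑ t, w s * w t * (f t / f s) := by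
  have hne : (Finset.univ : Finset S).Nonempty := by
    by_contra h
    rw [Finset.not_nonempty_iff_eq_empty] at h
    simp [h] at hw1
  -- positivity of the two sums
  have hA : 0 < ∑ s, w s * f s := by
    have h1 : ∑ s, w s * f s > 0 := by
      have : ∃ s, 0 < w s := by
        by_contra h
        push_neg at h
        have : ∑ s, w s = 0 := Finset.sum_eq_zero fun s _ => le_antisymm (h s) (hw s)
        simp [this] at hw1
      obtain ⟨s, hs⟩ := this
      exact Finset.sum_pos' (fun t _ => mul_nonneg (hw t) (hf t).le)
        ⟨s, Finset.mem_univ s, mul_pos hs (hf s)⟩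
    exact h1
  have hB : 0 < ∑ s, w s * (f s)⁻¹ := by
    have : ∃ s, 0 < w s := by
      by_contra h
      push_neg at h
      have : ∑ s, w s = 0 := Finset.sum_eq_zero fun s _ => le_antisymm (h s) (hw s)
      simp [this] at hw1
    obtain ⟨s, hs⟩ := this
    exact Finset.sum_pos' (fun t _ => mul_nonneg (hw t) (inv_pos.2 (hf t)).le)
      ⟨s, Finset.mem_univ s, mul_pos hs (inv_pos.2 (hf s))⟩
  -- the double sum factors
  have hfac : (∑ s, ∑ t, w s * w t * (f t / f s))
      = (∑ s, w s * (f s)⁻¹) * (∑ t, w t * f t) := by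
    rw [Finset.sum_mul_sum]
    refine Finset.sum_congr rfl fun s _ => Finset.sum_congr rfl fun t _ => ?_
    field_simp
  -- Jensen: -∑ w log f ≤ log ∑ w / f
  have hJ : -(∑ s, w s * Real.log (f s)) ≤ Real.log (∑ s, w s * (f s)⁻¹) := by
    have := strictConcaveOn_log_Ioi.concaveOn.le_map_sum
      (t := Finset.univ) (w := w) (p := fun s => (f s)⁻¹)
      (fun s _ => hw s) hw1 (fun s _ => inv_pos.2 (hf s))
    simp only [smul_eq_mul] at this
    calc -(∑ s, w s * Real.log (f s)) = ∑ s, w s * Real.log ((f s)⁻¹) := by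
          rw [← Finset.sum_neg_distrib]
          exact Finset.sum_congr rfl fun s _ => by rw [Real.log_inv]; ring
      _ ≤ _ := this
  -- elementary: log t ≤ e^{-C} t + C - 1
  have key : Real.log ((∑ s, w s * f s) * (∑ s, w s * (f s)⁻¹))
      ≤ Real.exp (-C) * ((∑ s, w s * f s) * (∑ s, w s * (f s)⁻¹)) + C - 1 := by
    set t := (∑ s, w s * f s) * (∑ s, w s * (f s)⁻¹) with ht
    have htpos : 0 < t := mul_pos hA hB
    have h := Real.log_le_sub_one_of_pos (mul_pos htpos (Real.exp_pos (-C)))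
    rw [Real.log_mul htpos.ne' (Real.exp_pos (-C)).ne', Real.log_exp] at h
    linarith [h]
  have hsplit : Real.log (∑ s, w s * f s)
      = Real.log ((∑ s, w s * f s) * (∑ s, w s * (f s)⁻¹))
        - Real.log (∑ s, w s * (f s)⁻¹) := by
    rw [Real.log_mul hA.ne' hB.ne']; ring
  rw [hsplit, hfac]
  nlinarith [key, hJ]
end

section
/- Let π be a random variable on a finite set with f(π) = p(x|π) > 0, define q_β(π) ∝ p(π) f(π)^β, and let g(β) = E_{q_β}[log f(π)]. Then ∫₀¹ g(β) dβ = log E_π[f(π)]. -/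
/-!
The integrand is the derivative of `β ↦ log Z(β)`, where `Z(β) = ∑ₛ w(s) f(s)^β` normalises
`q_β ∝ w f^β`; so the integral is `log Z(1) - log Z(0) = log E_w[f] - log 1`.
-/

open Real

noncomputable def partitionFn {S : Type*} [Fintype S] (w f : S → ℝ) (β : ℝ) : ℝ :=
  ∑ s, w s * f s ^ β

section PartitionFn

variable {S : Type*} [Fintype S] {w f : S → ℝ}

@[simp]
lemma partitionFn_zero : partitionFn w f 0 = ∑ s, w s := by
  simp [partitionFn]

@[simp]
lemma partitionFn_one : partitionFn w f 1 = ∑ s, w s * f s := by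
  simp [partitionFn]

lemma partitionFn_pos (hw : ∀ s, 0 ≤ w s) (hw₀ : 0 < ∑ s, w s) (hf : ∀ s, 0 < f s) (β : ℝ) :
    0 < partitionFn w f β := by
  obtain ⟨s₀, -, hs₀⟩ := Finset.exists_lt_of_sum_lt (s := Finset.univ) (f := 0) (g := w)
    (by simpa using hw₀)
  exact Finset.sum_pos' (fun s _ => mul_nonneg (hw s) (rpow_nonneg (hf s).le β))
    ⟨s₀, Finset.mem_univ _, mul_pos hs₀ (rpow_pos_of_pos (hf s₀) β)⟩

lemma hasDerivAt_partitionFn (hf : ∀ s, 0 < f s) (β : ℝ) :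
    HasDerivAt (partitionFn w f) (∑ s, w s * f s ^ β * log (f s)) β := by
  refine HasDerivAt.fun_sum fun s _ => ?_
  simpa only [mul_assoc] using
    ((hasStrictDerivAt_const_rpow (hf s) β).hasDerivAt).const_mul (w s)

lemma hasDerivAt_log_partitionFn (hf : ∀ s, 0 < f s) {β : ℝ} (hZ : partitionFn w f β ≠ 0) :
    HasDerivAt (fun β => log (partitionFn w f β))
      ((∑ s, w s * f s ^ β * log (f s)) / partitionFn w f β) β :=
  (hasDerivAt_partitionFn hf β).log hZ

lemma continuous_sum_rpow_mul_log_div_partitionFn (hf : ∀ s, 0 < f s)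
    (hZ : ∀ β, partitionFn w f β ≠ 0) :
    Continuous fun β => (∑ s, w s * f s ^ β * log (f s)) / partitionFn w f β := by
  have hrpow (s : S) : Continuous fun β : ℝ => f s ^ β := continuous_const_rpow (hf s).ne'
  refine Continuous.div (by fun_prop) ?_ hZ
  exact continuous_iff_continuousAt.2 fun β => (hasDerivAt_partitionFn hf β).continuousAt

end PartitionFn

theorem thermodynamic_identity {S : Type*} [Fintype S] (w f : S → ℝ)
    (hw : ∀ s, 0 ≤ w s) (hw1 : ∑ s, w s = 1) (hf : ∀ s, 0 < f s) :
    ∫ β in (0 : ℝ)..1,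
        (∑ s, w s * f s ^ β * Real.log (f s)) / (∑ s, w s * f s ^ β)
      = Real.log (∑ s, w s * f s) := by
  have hZ (β : ℝ) : partitionFn w f β ≠ 0 :=
    (partitionFn_pos hw (hw1 ▸ one_pos) hf β).ne'
  calc _ = log (partitionFn w f 1) - log (partitionFn w f 0) :=
        intervalIntegral.integral_eq_sub_of_hasDerivAt (f := fun β => log (partitionFn w f β))
          (fun β _ => hasDerivAt_log_partitionFn hf (hZ β))
          ((continuous_sum_rpow_mul_log_div_partitionFn hf hZ).intervalIntegrable 0 1)
    _ = log (∑ s, w s * f s) := by simp [hw1]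
end
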